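/- Expected smoothness bound for τ-partition independent sampling (Lemma 1(ii)): assume each f_i is convex and L_i-smooth and each partition average f_{C_j} is L_{C_j}-smooth. Then for all x, y ∈ ℝ^d, Σ_{j=1}^K q_{C_j} Σ_{S⊆C_j} (Π_{i∈S} p_i)(Π_{i∈C_j∖S} (1−p_i)) · ‖(1/n) Σ_{i∈S} (1/(q_{C_j} p_i))(∇f_i(x) − ∇f_i(y))‖² ≤ 2𝓛·(f(x) − f(y) − ⟨∇f(y), x−y⟩), where 𝓛 = (1/n) · max_j [ n_{C_j} L_{C_j}/q_{C_j} + max_{i∈C_j} L_i(1−p_i)/(q_{C_j} p_i) ]. -/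

import Mathlib

/-!
For a convex `h` with `L`-Lipschitz gradient `G`, write `D_h(x, y) = h x - h y - ⟪G y, x - y⟫`
for its Bregman divergence. Convexity at `y` and the descent lemma at the gradient step
`z = x - L⁻¹ (G x - G y)` give cocoercivity `‖G x - G y‖² ≤ 2 L D_h(x, y)`.

For independent sampling inside a block `C`, the importance-weighted sum `∑_{i ∈ S} p_i⁻¹ a_i`
has second moment `‖∑_{C} a_i‖² + ∑_{C} (1 - p_i)/p_i ‖a_i‖²`. Cocoercivity of the block average
`f_C` bounds the first term by `2 n_C L_C ∑_{C} D_{f_i}`, cocoercivity of each `f_i` bounds the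
second, and summing over the partition turns `∑_i D_{f_i}(x, y)` into `n D_f(x, y)`.
-/

open Finset RealInnerProductSpace

lemma ConvexOn.sum {𝕜 F β ι : Type*} [Semiring 𝕜] [PartialOrder 𝕜] [AddCommMonoid F]
    [SMul 𝕜 F] [AddCommMonoid β] [PartialOrder β] [IsOrderedAddMonoid β] [Module 𝕜 β]
    {s : Set F} (hs : Convex 𝕜 s) {t : Finset ι} {f : ι → F → β}
    (hf : ∀ i ∈ t, ConvexOn 𝕜 s (f i)) : ConvexOn 𝕜 s (fun u => ∑ i ∈ t, f i u) := by
  simp only [← Finset.sum_apply]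
  exact sum_induction _ (ConvexOn 𝕜 s) (fun _ _ => ConvexOn.add)
    (by exact convexOn_const (0 : β) hs) hf

section BernoulliSampling

variable {ι R M : Type*} [DecidableEq ι] [CommRing R] [AddCommGroup M] [Module R M]

/-- The probability that `S` is drawn when each `i ∈ C` is included independently with
probability `p i`. -/
def bernoulliWeight (p : ι → R) (C S : Finset ι) : R :=
  (∏ i ∈ S, p i) * ∏ i ∈ C \ S, (1 - p i)

lemma sum_bernoulliWeight (p : ι → R) (C : Finset ι) :
    ∑ S ∈ C.powerset, bernoulliWeight p C S = 1 := by
  simpa [bernoulliWeight] using (prod_add p (fun i => 1 - p i) C).symm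

lemma bernoulliWeight_insert_insert {a : ι} {s S : Finset ι} (ha : a ∉ s) (hS : S ⊆ s)
    (p : ι → R) : bernoulliWeight p (insert a s) (insert a S) = p a * bernoulliWeight p s S := by
  rw [bernoulliWeight, bernoulliWeight, prod_insert fun h => ha (hS h), insert_sdiff_insert,
    sdiff_insert_of_notMem ha, mul_assoc]

lemma bernoulliWeight_insert {a : ι} {s S : Finset ι} (ha : a ∉ s) (hS : S ⊆ s) (p : ι → R) :
    bernoulliWeight p (insert a s) S = (1 - p a) * bernoulliWeight p s S := by
  rw [bernoulliWeight, bernoulliWeight, insert_sdiff_of_notMem _ fun h => ha (hS h),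
    prod_insert fun h => ha (mem_sdiff.1 h).1, mul_left_comm]

lemma sum_powerset_insert_bernoulliWeight_smul {a : ι} {s : Finset ι} (ha : a ∉ s) (p : ι → R)
    (F : Finset ι → M) :
    ∑ S ∈ (insert a s).powerset, bernoulliWeight p (insert a s) S • F S =
      p a • ∑ S ∈ s.powerset, bernoulliWeight p s S • F (insert a S) +
        (1 - p a) • ∑ S ∈ s.powerset, bernoulliWeight p s S • F S := by
  rw [sum_powerset_insert ha, add_comm, smul_sum, smul_sum]
  congr 1 <;> refine sum_congr rfl fun S hS => ?_
  · rw [bernoulliWeight_insert_insert ha (mem_powerset.1 hS), mul_smul]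
  · rw [bernoulliWeight_insert ha (mem_powerset.1 hS), mul_smul]

lemma sum_bernoulliWeight_smul_sum (p : ι → R) (C : Finset ι) (v : ι → M) :
    ∑ S ∈ C.powerset, bernoulliWeight p C S • ∑ i ∈ S, v i = ∑ i ∈ C, p i • v i := by
  induction C using Finset.induction_on with
  | empty => simp [bernoulliWeight]
  | insert a s ha ih =>
    rw [sum_powerset_insert_bernoulliWeight_smul ha, sum_insert ha, ih]
    have hins : ∑ S ∈ s.powerset, bernoulliWeight p s S • ∑ i ∈ insert a S, v i =
        v a + ∑ i ∈ s, p i • v i := by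
      rw [← ih, ← one_smul R (v a), ← sum_bernoulliWeight p s, sum_smul, ← sum_add_distrib]
      refine sum_congr rfl fun S hS => ?_
      rw [sum_insert fun h => ha (mem_powerset.1 hS h), smul_add]
    rw [hins]
    module

variable {E : Type*} [NormedAddCommGroup E] [InnerProductSpace ℝ E]

lemma sum_bernoulliWeight_mul_norm_sum_sq (p : ι → ℝ) (C : Finset ι) (v : ι → E) :
    ∑ S ∈ C.powerset, bernoulliWeight p C S * ‖∑ i ∈ S, v i‖ ^ 2 =
      ‖∑ i ∈ C, p i • v i‖ ^ 2 + ∑ i ∈ C, p i * (1 - p i) * ‖v i‖ ^ 2 := by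
  induction C using Finset.induction_on with
  | empty => simp [bernoulliWeight]
  | insert a s ha ih =>
    simp only [← smul_eq_mul (a := bernoulliWeight _ _ _)] at ih ⊢
    rw [sum_powerset_insert_bernoulliWeight_smul ha, ih, sum_insert ha, sum_insert ha]
    set m := ∑ i ∈ s, p i • v i
    have hins : ∑ S ∈ s.powerset, bernoulliWeight p s S • ‖∑ i ∈ insert a S, v i‖ ^ 2 =
        ‖v a‖ ^ 2 + 2 * ⟪v a, m⟫ + (‖m‖ ^ 2 + ∑ i ∈ s, p i * (1 - p i) * ‖v i‖ ^ 2) := by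
      have hm : ⟪v a, m⟫ = ∑ S ∈ s.powerset, bernoulliWeight p s S • ⟪v a, ∑ i ∈ S, v i⟫ := by
        simp only [m, ← sum_bernoulliWeight_smul_sum p s v, inner_sum, real_inner_smul_right,
          smul_eq_mul]
      rw [← ih, hm, mul_sum, ← one_mul (‖v a‖ ^ 2), ← sum_bernoulliWeight p s, sum_mul,
        ← sum_add_distrib, ← sum_add_distrib]
      refine sum_congr rfl fun S hS => ?_
      rw [sum_insert fun h => ha (mem_powerset.1 hS h), norm_add_sq_real]
      simp only [smul_eq_mul]
      ring
    rw [hins, norm_add_sq_real, norm_smul, real_inner_smul_left, Real.norm_eq_abs, mul_pow, sq_abs,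
      smul_eq_mul]
    ring

lemma sum_bernoulliWeight_mul_norm_sum_inv_smul_sq {p : ι → ℝ} {C : Finset ι}
    (hp : ∀ i ∈ C, p i ≠ 0) (a : ι → E) :
    ∑ S ∈ C.powerset, bernoulliWeight p C S * ‖∑ i ∈ S, (p i)⁻¹ • a i‖ ^ 2 =
      ‖∑ i ∈ C, a i‖ ^ 2 + ∑ i ∈ C, (1 - p i) / p i * ‖a i‖ ^ 2 := by
  rw [sum_bernoulliWeight_mul_norm_sum_sq]
  congr 1
  · exact congr_arg (‖·‖ ^ 2) (sum_congr rfl fun i hi => smul_inv_smul₀ (hp i hi) _)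
  · refine sum_congr rfl fun i hi => ?_
    rw [norm_smul, mul_pow, norm_inv, Real.norm_eq_abs, inv_pow, sq_abs]
    field_simp [hp i hi]

lemma mul_sum_bernoulliWeight_mul_norm_sq_le {C : Finset ι} (hC : C.Nonempty)
    {p L D : ι → ℝ} {a : ι → E} {q LC : ℝ} (n : ℝ) (hq : 0 < q) (hp0 : ∀ i ∈ C, 0 < p i)
    (hp1 : ∀ i ∈ C, p i ≤ 1) (hD : ∀ i ∈ C, 0 ≤ D i) (ha : ∀ i ∈ C, ‖a i‖ ^ 2 ≤ 2 * L i * D i)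
    (hsum : ‖∑ i ∈ C, a i‖ ^ 2 ≤ 2 * #C * LC * ∑ i ∈ C, D i) :
    q * ∑ S ∈ C.powerset, bernoulliWeight p C S * ‖n⁻¹ • ∑ i ∈ S, (q * p i)⁻¹ • a i‖ ^ 2 ≤
      n⁻¹ ^ 2 * (2 * (#C * LC / q + C.sup' hC fun i => L i * (1 - p i) / (q * p i))) *
        ∑ i ∈ C, D i := by
  have hrescale : ∀ S : Finset ι,
      n⁻¹ • ∑ i ∈ S, (q * p i)⁻¹ • a i = (n * q)⁻¹ • ∑ i ∈ S, (p i)⁻¹ • a i := fun S => by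
    simp only [smul_sum, smul_smul, mul_inv, mul_assoc]
  calc q * ∑ S ∈ C.powerset, bernoulliWeight p C S * ‖n⁻¹ • ∑ i ∈ S, (q * p i)⁻¹ • a i‖ ^ 2
      = q * (n * q)⁻¹ ^ 2 *
          ∑ S ∈ C.powerset, bernoulliWeight p C S * ‖∑ i ∈ S, (p i)⁻¹ • a i‖ ^ 2 := by
        rw [mul_sum, mul_sum]
        refine sum_congr rfl fun S _ => ?_
        rw [hrescale, norm_smul, mul_pow, Real.norm_eq_abs, sq_abs]
        ring
    _ = q * (n * q)⁻¹ ^ 2 * (‖∑ i ∈ C, a i‖ ^ 2 + ∑ i ∈ C, (1 - p i) / p i * ‖a i‖ ^ 2) := by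
        rw [sum_bernoulliWeight_mul_norm_sum_inv_smul_sq fun i hi => (hp0 i hi).ne']
    _ ≤ q * (n * q)⁻¹ ^ 2 *
          (2 * #C * LC * ∑ i ∈ C, D i + ∑ i ∈ C, (1 - p i) / p i * (2 * L i * D i)) := by
        gcongr with i hi
        · exact div_nonneg (sub_nonneg.2 (hp1 i hi)) (hp0 i hi).le
        · exact ha i hi
    _ = n⁻¹ ^ 2 * (2 * (#C * LC / q) * ∑ i ∈ C, D i +
          ∑ i ∈ C, 2 * (L i * (1 - p i) / (q * p i)) * D i) := by
        rw [mul_add, mul_add, mul_inv]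
        congr 1
        · field_simp
        · rw [mul_sum, mul_sum]
          refine sum_congr rfl fun i hi => ?_
          field_simp
    _ ≤ n⁻¹ ^ 2 * (2 * (#C * LC / q) * ∑ i ∈ C, D i +
          ∑ i ∈ C, 2 * (C.sup' hC fun i => L i * (1 - p i) / (q * p i)) * D i) := by
        gcongr with i hi
        · exact hD i hi
        · exact le_sup' (fun i => L i * (1 - p i) / (q * p i)) hi
    _ = n⁻¹ ^ 2 * (2 * (#C * LC / q + C.sup' hC fun i => L i * (1 - p i) / (q * p i))) *
        ∑ i ∈ C, D i := by
        rw [← mul_sum]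
        ring

end BernoulliSampling

section Bregman

variable {E : Type*} [NormedAddCommGroup E] [InnerProductSpace ℝ E]

def bregman (h : E → ℝ) (G : E → E) (x y : E) : ℝ :=
  h x - h y - ⟪G y, x - y⟫

lemma bregman_const_mul_sum {ι : Type*} (t : Finset ι) (c : ℝ) (h : ι → E → ℝ)
    (G : ι → E → E) (x y : E) :
    bregman (fun u => c * ∑ i ∈ t, h i u) (fun w => c • ∑ i ∈ t, G i w) x y =
      c * ∑ i ∈ t, bregman (h i) (G i) x y := by
  simp only [bregman, real_inner_smul_left, sum_inner, sum_sub_distrib]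
  ring

lemma bregman_eq_sub_add_inner (h : E → ℝ) (G : E → E) (x y z : E) :
    bregman h G x y = bregman h G z y - bregman h G z x + ⟪G y - G x, z - x⟫ := by
  simp only [bregman, inner_sub_left, inner_sub_right]
  ring

variable [CompleteSpace E] {h : E → ℝ} {G : E → E}

lemma HasGradientAt.sum {ι : Type*} {t : Finset ι} {f : ι → E → ℝ} {f' : ι → E} {x : E}
    (hf : ∀ i ∈ t, HasGradientAt (f i) (f' i) x) :
    HasGradientAt (fun u => ∑ i ∈ t, f i u) (∑ i ∈ t, f' i) x := by
  rw [hasGradientAt_iff_hasFDerivAt, map_sum]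
  exact HasFDerivAt.fun_sum fun i hi => hasGradientAt_iff_hasFDerivAt.1 (hf i hi)

lemma HasGradientAt.const_mul {f' x : E} (c : ℝ) (hf : HasGradientAt h f' x) :
    HasGradientAt (fun u => c * h u) (c • f') x := by
  rw [hasGradientAt_iff_hasFDerivAt, map_smul]
  exact (hasGradientAt_iff_hasFDerivAt.1 hf).const_mul c

lemma HasGradientAt.hasDerivAt_comp_lineMap {G' x z : E} {t : ℝ}
    (hg : HasGradientAt h G' (AffineMap.lineMap x z t)) :
    HasDerivAt (fun s => h (AffineMap.lineMap x z s)) ⟪G', z - x⟫ t :=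
  (hasGradientAt_iff_hasFDerivAt.1 hg).comp_hasDerivAt t AffineMap.hasDerivAt_lineMap

lemma ConvexOn.bregman_nonneg (hc : ConvexOn ℝ Set.univ h) {x y : E}
    (hg : HasGradientAt h (G y) y) : 0 ≤ bregman h G x y := by
  have hline : ConvexOn ℝ Set.univ (fun t : ℝ => h (AffineMap.lineMap y x t)) :=
    hc.comp_affineMap _
  have hd : HasDerivAt (fun t : ℝ => h (AffineMap.lineMap y x t)) ⟪G y, x - y⟫ 0 :=
    HasGradientAt.hasDerivAt_comp_lineMap (by simpa using hg)
  have hslope := hline.le_slope_of_hasDerivAt (Set.mem_univ 0) (Set.mem_univ 1) one_pos hd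
  rw [slope_def_field, AffineMap.lineMap_apply_one, AffineMap.lineMap_apply_zero, sub_zero,
    div_one] at hslope
  rw [bregman]
  linarith

lemma bregman_le_of_lipschitz (hg : ∀ w, HasGradientAt h (G w) w) {L : ℝ}
    (hL : ∀ a b, ‖G a - G b‖ ≤ L * ‖a - b‖) (z x : E) :
    bregman h G z x ≤ L / 2 * ‖z - x‖ ^ 2 := by
  set ℓ := AffineMap.lineMap (k := ℝ) x z
  have hℓ : ∀ t, ℓ t - x = t • (z - x) := AffineMap.lineMap_vsub_left x z
  have hf : ∀ t, HasDerivAt (fun s => h (ℓ s) - h x - s * ⟪G x, z - x⟫)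
      (⟪G (ℓ t), z - x⟫ - ⟪G x, z - x⟫) t := fun t =>
    ((hg _).hasDerivAt_comp_lineMap.sub_const _).sub (hasDerivAt_mul_const _)
  have hB : ∀ t : ℝ, HasDerivAt (fun s => L / 2 * ‖z - x‖ ^ 2 * s ^ 2) (L * ‖z - x‖ ^ 2 * t) t :=
    fun t => ((hasDerivAt_pow 2 t).const_mul _).congr_deriv (by ring)
  have hbound : ∀ t ∈ Set.Ico (0 : ℝ) 1,
      ⟪G (ℓ t), z - x⟫ - ⟪G x, z - x⟫ ≤ L * ‖z - x‖ ^ 2 * t := fun t ht =>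
    calc ⟪G (ℓ t), z - x⟫ - ⟪G x, z - x⟫ ≤ ‖G (ℓ t) - G x‖ * ‖z - x‖ := by
          rw [← inner_sub_left]; exact real_inner_le_norm _ _
      _ ≤ L * ‖ℓ t - x‖ * ‖z - x‖ := by gcongr; exact hL _ _
      _ = L * ‖z - x‖ ^ 2 * t := by
          rw [hℓ, norm_smul, Real.norm_eq_abs, abs_of_nonneg ht.1]; ring
  have hfence := image_le_of_deriv_right_le_deriv_boundary
    (fun t _ => (hf t).continuousAt.continuousWithinAt) (fun t _ => (hf t).hasDerivWithinAt)
    (by simp [ℓ]) (fun t _ => (hB t).continuousAt.continuousWithinAt)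
    (fun t _ => (hB t).hasDerivWithinAt) hbound (Set.right_mem_Icc.2 zero_le_one)
  simpa only [bregman, tsub_le_iff_right, ℓ, AffineMap.lineMap_apply_one, one_pow, one_mul,
    mul_one] using hfence

lemma ConvexOn.norm_sub_sq_le_bregman (hc : ConvexOn ℝ Set.univ h)
    (hg : ∀ w, HasGradientAt h (G w) w) {L : ℝ} (hL : ∀ a b, ‖G a - G b‖ ≤ L * ‖a - b‖)
    (x y : E) : ‖G x - G y‖ ^ 2 ≤ 2 * L * bregman h G x y := by
  rcases le_or_gt L 0 with hL0 | hL0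
  · have hB := hc.bregman_nonneg (x := x) (hg y)
    have hxy := bregman_le_of_lipschitz hg hL x y
    have hG := hL x y
    nlinarith [norm_nonneg (G x - G y), norm_nonneg (x - y)]
  · set z := x - L⁻¹ • (G x - G y)
    have hzx : z - x = -(L⁻¹ • (G x - G y)) := by simp [z]
    have hconv := hc.bregman_nonneg (x := z) (hg y)
    have hdesc : L * bregman h G z x ≤ ‖G x - G y‖ ^ 2 / 2 := by
      calc L * bregman h G z x ≤ L * (L / 2 * ‖z - x‖ ^ 2) :=
            mul_le_mul_of_nonneg_left (bregman_le_of_lipschitz hg hL z x) hL0.le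
        _ = ‖G x - G y‖ ^ 2 / 2 := by
          rw [hzx, norm_neg, norm_smul, norm_inv, Real.norm_eq_abs, abs_of_pos hL0]
          field_simp
    rw [bregman_eq_sub_add_inner h G x y z, hzx, inner_neg_right, real_inner_smul_right,
      ← neg_sub (G x), inner_neg_left, real_inner_self_eq_norm_sq]
    field_simp
    nlinarith [mul_nonneg hL0.le hconv]

lemma norm_sum_sub_sq_le_card_mul_sum_bregman {ι : Type*} (C : Finset ι) {f : ι → E → ℝ}
    {g : ι → E → E} (hgrad : ∀ i ∈ C, ∀ w, HasGradientAt (f i) (g i w) w)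
    (hconv : ∀ i ∈ C, ConvexOn ℝ Set.univ (f i)) {LC : ℝ}
    (hLC : ∀ a b, ‖(#C : ℝ)⁻¹ • ∑ i ∈ C, g i a - (#C : ℝ)⁻¹ • ∑ i ∈ C, g i b‖ ≤ LC * ‖a - b‖)
    (x y : E) :
    ‖∑ i ∈ C, (g i x - g i y)‖ ^ 2 ≤ 2 * #C * LC * ∑ i ∈ C, bregman (f i) (g i) x y := by
  rcases C.eq_empty_or_nonempty with rfl | hC
  · simp
  have hcard : (0 : ℝ) < #C := by exact_mod_cast hC.card_pos
  have hcoco := ConvexOn.norm_sub_sq_le_bregman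
    ((ConvexOn.sum convex_univ hconv).smul (inv_nonneg.2 hcard.le))
    (fun w => (HasGradientAt.sum fun i hi => hgrad i hi w).const_mul (#C : ℝ)⁻¹) hLC x y
  simp only [smul_eq_mul] at hcoco
  rw [bregman_const_mul_sum, ← smul_sub, ← sum_sub_distrib, norm_smul, Real.norm_eq_abs,
    abs_of_pos (inv_pos.2 hcard)] at hcoco
  calc ‖∑ i ∈ C, (g i x - g i y)‖ ^ 2
      = (#C : ℝ) ^ 2 * ((#C : ℝ)⁻¹ * ‖∑ i ∈ C, (g i x - g i y)‖) ^ 2 := by field_simp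
    _ ≤ (#C : ℝ) ^ 2 * (2 * LC * ((#C : ℝ)⁻¹ * ∑ i ∈ C, bregman (f i) (g i) x y)) := by gcongr
    _ = 2 * #C * LC * ∑ i ∈ C, bregman (f i) (g i) x y := by field_simp

end Bregman

lemma sum_sum_eq_sum_of_existsUnique_mem {ι κ M : Type*} [Fintype ι] [Fintype κ] [DecidableEq ι]
    [AddCommMonoid M] {C : κ → Finset ι} (hC : ∀ i, ∃! j, i ∈ C j) (D : ι → M) :
    ∑ j, ∑ i ∈ C j, D i = ∑ i, D i := by
  rw [← sum_biUnion fun j _ k _ hjk => disjoint_left.2 fun i hj hk => hjk ((hC i).unique hj hk)]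
  congr
  ext i
  simpa using (hC i).exists

theorem stmt3_general {d n K : ℕ} (hK : 0 < K)
    (f : Fin n → EuclideanSpace ℝ (Fin d) → ℝ)
    (g : Fin n → EuclideanSpace ℝ (Fin d) → EuclideanSpace ℝ (Fin d))
    (hgrad : ∀ i x, HasGradientAt (f i) (g i x) x)
    (C : Fin K → Finset (Fin n))
    (hpart : ∀ i : Fin n, ∃! j, i ∈ C j)
    (hCne : ∀ j, (C j).Nonempty)
    (q : Fin K → ℝ) (hq : ∀ j, 0 < q j)
    (p : Fin n → ℝ) (hp0 : ∀ i, 0 < p i) (hp1 : ∀ i, p i ≤ 1)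
    (L : Fin n → ℝ) (LC : Fin K → ℝ)
    (hconv : ∀ i, ConvexOn ℝ Set.univ (f i))
    (hLi : ∀ i x y, ‖g i x - g i y‖ ≤ L i * ‖x - y‖)
    (hLC : ∀ j x y,
      ‖((C j).card : ℝ)⁻¹ • ∑ i ∈ C j, g i x -
          ((C j).card : ℝ)⁻¹ • ∑ i ∈ C j, g i y‖ ≤ LC j * ‖x - y‖)
    (x y : EuclideanSpace ℝ (Fin d)) :
    ∑ j, q j *
        ∑ S ∈ (C j).powerset,
          ((∏ i ∈ S, p i) * ∏ i ∈ C j \ S, (1 - p i)) *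
            ‖(n : ℝ)⁻¹ • ∑ i ∈ S, (q j * p i)⁻¹ • (g i x - g i y)‖ ^ 2
      ≤ 2 *
          ((n : ℝ)⁻¹ *
            (Finset.univ.sup' ⟨⟨0, hK⟩, Finset.mem_univ _⟩ fun j =>
              ((C j).card : ℝ) * LC j / q j +
                (C j).sup' (hCne j) fun i => L i * (1 - p i) / (q j * p i))) *
          ((n : ℝ)⁻¹ * ∑ i, f i x - (n : ℝ)⁻¹ * ∑ i, f i y -
            ⟪(n : ℝ)⁻¹ • ∑ i, g i y, x - y⟫) := by
  set M := univ.sup' ⟨⟨0, hK⟩, mem_univ _⟩ fun j =>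
    ((C j).card : ℝ) * LC j / q j + (C j).sup' (hCne j) fun i => L i * (1 - p i) / (q j * p i)
  have hD : ∀ i, 0 ≤ bregman (f i) (g i) x y := fun i => (hconv i).bregman_nonneg (hgrad i y)
  have hblock : ∀ j, q j * ∑ S ∈ (C j).powerset, bernoulliWeight p (C j) S *
        ‖(n : ℝ)⁻¹ • ∑ i ∈ S, (q j * p i)⁻¹ • (g i x - g i y)‖ ^ 2 ≤
      (n : ℝ)⁻¹ ^ 2 * (2 * M) * ∑ i ∈ C j, bregman (f i) (g i) x y := fun j => by
    refine (mul_sum_bernoulliWeight_mul_norm_sq_le (hCne j) (a := fun i => g i x - g i y) n (hq j)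
      (fun i _ => hp0 i) (fun i _ => hp1 i) (fun i _ => hD i)
      (fun i _ => (hconv i).norm_sub_sq_le_bregman (hgrad i) (hLi i) x y)
      (norm_sum_sub_sq_le_card_mul_sum_bregman (C j) (fun i _ => hgrad i) (fun i _ => hconv i)
        (hLC j) x y)).trans ?_
    gcongr
    · exact sum_nonneg fun i _ => hD i
    · exact le_sup' (fun j => ((C j).card : ℝ) * LC j / q j +
        (C j).sup' (hCne j) fun i => L i * (1 - p i) / (q j * p i)) (mem_univ j)
  calc _ ≤ ∑ j, (n : ℝ)⁻¹ ^ 2 * (2 * M) * ∑ i ∈ C j, bregman (f i) (g i) x y :=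
        sum_le_sum fun j _ => hblock j
    _ = 2 * ((n : ℝ)⁻¹ * M) * bregman (fun u => (n : ℝ)⁻¹ * ∑ i, f i u)
          (fun w => (n : ℝ)⁻¹ • ∑ i, g i w) x y := by
        rw [← mul_sum, sum_sum_eq_sum_of_existsUnique_mem hpart, bregman_const_mul_sum]
        ring

/-- Expected smoothness bound for τ-partition independent sampling (Lemma 1(ii)). -/
theorem stmt3 {d n K : ℕ} (hn : 1 ≤ n) (hK : 0 < K)
    (f : Fin n → EuclideanSpace ℝ (Fin d) → ℝ)
    (g : Fin n → EuclideanSpace ℝ (Fin d) → EuclideanSpace ℝ (Fin d))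
    (hgrad : ∀ i x, HasGradientAt (f i) (g i x) x)
    (C : Fin K → Finset (Fin n))
    (hpart : ∀ i : Fin n, ∃! j, i ∈ C j)
    (hCne : ∀ j, (C j).Nonempty)
    (q : Fin K → ℝ) (hq : ∀ j, 0 < q j) (hqsum : ∑ j, q j = 1)
    (p : Fin n → ℝ) (hp0 : ∀ i, 0 < p i) (hp1 : ∀ i, p i ≤ 1)
    (L : Fin n → ℝ) (LC : Fin K → ℝ)
    (hconv : ∀ i, ConvexOn ℝ Set.univ (f i))
    (hLi : ∀ i x y, ‖g i x - g i y‖ ≤ L i * ‖x - y‖)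
    (hLC : ∀ j x y,
      ‖((C j).card : ℝ)⁻¹ • ∑ i ∈ C j, g i x -
          ((C j).card : ℝ)⁻¹ • ∑ i ∈ C j, g i y‖ ≤ LC j * ‖x - y‖)
    (x y : EuclideanSpace ℝ (Fin d)) :
    ∑ j, q j *
        ∑ S ∈ (C j).powerset,
          ((∏ i ∈ S, p i) * ∏ i ∈ C j \ S, (1 - p i)) *
            ‖(n : ℝ)⁻¹ • ∑ i ∈ S, (q j * p i)⁻¹ • (g i x - g i y)‖ ^ 2
      ≤ 2 *
          ((n : ℝ)⁻¹ *
            (Finset.univ.sup' ⟨⟨0, hK⟩, Finset.mem_univ _⟩ fun j =>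
              ((C j).card : ℝ) * LC j / q j +
                (C j).sup' (hCne j) fun i => L i * (1 - p i) / (q j * p i))) *
          ((n : ℝ)⁻¹ * ∑ i, f i x - (n : ℝ)⁻¹ * ∑ i, f i y -
            ⟪(n : ℝ)⁻¹ • ∑ i, g i y, x - y⟫) :=
  stmt3_general hK f g hgrad C hpart hCne q hq p hp0 hp1 L LC hconv hLi hLC x y
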